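/- Let α, e be epsilon numbers and s an ordinal with s < α⁺. If Ep(s) ∩ α ⊆ e, then (ω^s)[α := e] = ω^(s[α := e]). -/

import Mathlib

open Ordinal

def IsEps (x : Ordinal.{0}) : Prop := omega0 ^ x = x

noncomputable def nextEps (x : Ordinal.{0}) : Ordinal.{0} := sInf {e | IsEps e ∧ x < e}

inductive InEp : Ordinal.{0} → Ordinal.{0} → Prop
  | self (x : Ordinal.{0}) (h : omega0 ^ x = x) : InEp x x
  | exp (x e c y : Ordinal.{0}) (h : omega0 ^ x ≠ x) (hm : (e, c) ∈ CNF omega0 x)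
      (hy : InEp y e) : InEp y x

/-- The set of epsilon numbers appearing in the iterated Cantor normal form of `x`. -/
def Ep (x : Ordinal.{0}) : Set Ordinal.{0} := {y | InEp y x}

/-- Substitution of the epsilon number `α` by the epsilon number `e` in the
iterated Cantor normal form of `x`. -/
noncomputable def subst (α e : Ordinal.{0}) (x : Ordinal.{0}) : Ordinal.{0} :=
  if h : omega0 ^ x = x then (if x = α then e else x)
  else ((CNF omega0 x).attach.map (fun p => omega0 ^ (subst α e p.1.1) * p.1.2)).sum
termination_by x
decreasing_by
  have hx0 : x ≠ 0 := by
    rintro rfl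
    have := p.2
    simp [Ordinal.CNF.zero_right] at this
  have hle := Ordinal.CNF.fst_le_log p.2
  have hlt : Ordinal.log omega0 x < x := by
    have h1 : x < omega0 ^ x :=
      lt_of_le_of_ne (Ordinal.right_le_opow x one_lt_omega0) (Ne.symm h)
    exact (Ordinal.lt_opow_iff_log_lt one_lt_omega0 hx0).mp h1
  exact lt_of_le_of_lt hle hlt

theorem Ordinal.CNF_opow {b : Ordinal} (hb : 1 < b) (s : Ordinal) :
    CNF b (b ^ s) = [(s, 1)] := by
  simpa [CNF.zero_right] using
    CNF.opow_mul_add (e := s) (y := 0) hb one_ne_zero hb (opow_pos s (zero_lt_one.trans hb))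

theorem subst_of_isEps {α e x : Ordinal.{0}} (hx : IsEps x) :
    subst α e x = if x = α then e else x := by
  rw [IsEps] at hx
  rw [subst, dif_pos hx]

theorem subst_of_not_isEps {α e x : Ordinal.{0}} (hx : ¬IsEps x) :
    subst α e x = ((CNF omega0 x).map fun p => omega0 ^ subst α e p.1 * p.2).sum := by
  rw [IsEps] at hx
  rw [subst, dif_neg hx, List.attach_map_val (l := CNF omega0 x) (f := fun p => omega0 ^ subst α e p.1 * p.2)]

theorem isEps_opow_iff {s : Ordinal.{0}} : IsEps (omega0 ^ s) ↔ IsEps s :=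
  opow_right_inj one_lt_omega0

theorem subst_opow_general (α e s : Ordinal.{0}) (he : IsEps e) :
    subst α e (omega0 ^ s) = omega0 ^ (subst α e s) := by
  by_cases hs : IsEps s
  · rw [hs, subst_of_isEps hs]
    split_ifs
    exacts [he.symm, hs.symm]
  · rw [subst_of_not_isEps (isEps_opow_iff.not.mpr hs), CNF_opow one_lt_omega0]
    simp

/-- The substitution x ↦ x[α := e] commutes with base-ω exponentiation. -/
theorem subst_opow (α e s : Ordinal.{0}) (hα : IsEps α) (he : IsEps e)
    (hs : s < nextEps α) (hse : Ep s ∩ Set.Iio α ⊆ Set.Iio e) :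
    subst α e (omega0 ^ s) = omega0 ^ (subst α e s) :=
  subst_opow_general α e s he
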